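/- arXiv:1406.6326 — 12 statements merged into one kernel-verified Lean document; each statement's English description precedes it below -/
import Mathlib

section
/- MI2 (slicing off the k₁ = k face): For all integers n ≥ 1, β ≥ 1, and δ ≥ 2, the multiset identity S(n+1, 0, β−1, 1, δ−1, 0, 0) = S(n+1, β−1, β−1, 1, δ−2, 0, 0) ⊎ S(n+1, 0, β−1, 1, δ−1, 1, 0) holds. -/
/-- Multiset of sums `k₁ + ⋯ + k_m` over integer chains `0 ≤ k_m ≤ ⋯ ≤ k₁ ≤ top`
(for `m = 0` the only chain is empty, with sum `0`). -/
noncomputable def chainZ : ℕ → ℤ → Multiset ℤ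
  | 0, _ => {0}
  | m + 1, top => (Finset.Icc 0 top).val.bind fun v => (chainZ m v).map (· + v)

/-- The simplicial multiset `S(n, α, β, γ, δ, ε, ζ)`: the multiset of integers
`α + β*k + k₁ + ⋯ + k_{n-1}` over all integer tuples `(k, k₁, …, k_{n-1})` with
`γ - 1 ≤ k ≤ δ - 1`, `ε*k ≤ k₁ ≤ k - ζ`, and `0 ≤ k_{m+1} ≤ k_m` for `1 ≤ m ≤ n - 2`;
for `n = 1` the elements are just `α + β*k`.  Empty ranges give the empty multiset. -/
noncomputable def simplexMS (n : ℕ) (α β γ δ ε ζ : ℤ) : Multiset ℤ :=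
  (Finset.Icc (γ - 1) (δ - 1)).val.bind fun k =>
    if n = 1 then {α + β * k}
    else (Finset.Icc (ε * k) (k - ζ)).val.bind fun k₁ =>
      (chainZ (n - 2) k₁).map fun t => α + β * k + k₁ + t

open Finset

namespace Int

variable {α : Type*}

lemma Icc_val_eq_cons_Icc_sub_one {a b : ℤ} (h : a ≤ b) :
    (Icc a b).val = b ::ₘ (Icc a (b - 1)).val := by
  rw [Icc_eq_cons_Ico h, cons_val, Icc_sub_one_right_eq_Ico]

lemma bind_Icc_val_add_one_left (a b : ℤ) (g : ℤ → Multiset α) :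
    (Icc (a + 1) b).val.bind g = (Icc a (b - 1)).val.bind fun k => g (k + 1) := by
  rw [← sub_add_cancel b 1, ← map_add_right_Icc, map_val, Multiset.bind_map, sub_add_cancel]
  rfl

lemma bind_Icc_val_eq_bind_Icc_add_one_left {a b : ℤ} {g : ℤ → Multiset α} (hg : g a = 0) :
    (Icc a b).val.bind g = (Icc (a + 1) b).val.bind g := by
  rcases le_or_gt a b with h | h
  · rw [Icc_eq_cons_Ioc h, cons_val, Multiset.cons_bind, hg, zero_add, Icc_add_one_left_eq_Ioc]
  · rw [Icc_eq_empty_of_lt h, Icc_eq_empty_of_lt (by omega)]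

/-- Slicing the triangle `a ≤ k₁ ≤ k ≤ d` into its diagonal `k₁ = k` and the part `k₁ < k`,
reindexed by `k ↦ k + 1`. -/
lemma bind_Icc_bind_Icc_eq_add_diag (a d : ℤ) (f : ℤ → ℤ → Multiset α) :
    ((Icc a d).val.bind fun k => (Icc a k).val.bind (f k)) =
      ((Icc a (d - 1)).val.bind fun k => (Icc a k).val.bind (f (k + 1))) +
        (Icc a d).val.bind fun k => f k k := by
  have split : ∀ k ∈ (Icc a d).val,
      (Icc a k).val.bind (f k) = (Icc a (k - 1)).val.bind (f k) + f k k := fun k hk => by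
    rw [Icc_val_eq_cons_Icc_sub_one (mem_Icc.1 hk).1, Multiset.cons_bind, add_comm]
  have off_diag_empty : (Icc a (a - 1)).val.bind (f a) = 0 := by
    rw [Icc_eq_empty_of_lt (by omega)]
    rfl
  rw [Multiset.bind_congr split, Multiset.bind_add, bind_Icc_val_eq_bind_Icc_add_one_left
    off_diag_empty, bind_Icc_val_add_one_left]
  simp only [add_sub_cancel_right]

end Int

theorem MI2_general (n : ℕ) (β δ : ℤ) (hn : 1 ≤ n) :
    simplexMS (n + 1) 0 (β - 1) 1 (δ - 1) 0 0 =
      simplexMS (n + 1) (β - 1) (β - 1) 1 (δ - 2) 0 0 +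
        simplexMS (n + 1) 0 (β - 1) 1 (δ - 1) 1 0 := by
  have hn1 : n + 1 ≠ 1 := by omega
  simp only [simplexMS, if_neg hn1, sub_self, zero_mul, one_mul, sub_zero, zero_add,
    Icc_self, singleton_val, Multiset.singleton_bind]
  rw [show δ - 1 - 1 = δ - 2 by ring, Int.bind_Icc_bind_Icc_eq_add_diag]
  congr 1
  refine Multiset.bind_congr fun k _ => Multiset.bind_congr fun k₁ _ => ?_
  exact Multiset.map_congr rfl fun t _ => by ring

/-- MI2 (slicing off the `k₁ = k` face):
`S(n+1,0,β-1,1,δ-1,0,0) = S(n+1,β-1,β-1,1,δ-2,0,0) ⊎ S(n+1,0,β-1,1,δ-1,1,0)`. -/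
theorem MI2 (n : ℕ) (β δ : ℤ) (hn : 1 ≤ n) (hβ : 1 ≤ β) (hδ : 2 ≤ δ) :
    simplexMS (n + 1) 0 (β - 1) 1 (δ - 1) 0 0 =
      simplexMS (n + 1) (β - 1) (β - 1) 1 (δ - 2) 0 0 +
        simplexMS (n + 1) 0 (β - 1) 1 (δ - 1) 1 0 :=
  MI2_general n β δ hn
end

section
/- MI3 (dimension-raising identity): For all integers n ≥ 1, β ≥ 1, and δ ≥ 2, the multiset identity S(n, 0, β, 1, δ−1, 0, 0) = S(n+1, 0, β−1, 1, δ−1, 1, 0) holds. -/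
/-! With `ε = ζ = 0` the variable `k₁` is just the top of a chain below `k`, so `S(n, …)` sums
over chains of length `n - 1` below `k`. With `ε = 1, ζ = 0` it is pinned to `k₁ = k`, so
`S(n + 1, …)` sums over the same chains, and the extra summand `k₁ = k` turns `β - 1` into `β`. -/

section

variable (m : ℕ) (α β γ δ : ℤ)

theorem simplexMS_zero_zero_eq_bind_chainZ :
    simplexMS (m + 1) α β γ δ 0 0 =
      (Finset.Icc (γ - 1) (δ - 1)).val.bind fun k => (chainZ m k).map (α + β * k + ·) := by
  refine Multiset.bind_congr fun k _ => ?_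
  cases m with
  | zero => simp [chainZ]
  | succ m =>
    simp only [zero_mul, sub_zero, chainZ, Multiset.map_bind, Multiset.map_map,
      Function.comp_def]
    exact Multiset.bind_congr fun v _ => Multiset.map_congr rfl fun t _ => by ring

theorem simplexMS_one_zero_eq_bind_chainZ :
    simplexMS (m + 2) α β γ δ 1 0 =
      (Finset.Icc (γ - 1) (δ - 1)).val.bind fun k => (chainZ m k).map (α + β * k + k + ·) := by
  refine Multiset.bind_congr fun k _ => ?_
  simp [Finset.Icc_self, add_assoc]

end

theorem MI3_general (n : ℕ) (β δ : ℤ) (hn : 1 ≤ n) :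
    simplexMS n 0 β 1 (δ - 1) 0 0 = simplexMS (n + 1) 0 (β - 1) 1 (δ - 1) 1 0 := by
  obtain ⟨m, rfl⟩ : ∃ m, n = m + 1 := ⟨n - 1, by omega⟩
  rw [simplexMS_zero_zero_eq_bind_chainZ, simplexMS_one_zero_eq_bind_chainZ]
  exact Multiset.bind_congr fun k _ => Multiset.map_congr rfl fun t _ => by ring

/-- MI3 (dimension-raising identity): `S(n,0,β,1,δ-1,0,0) = S(n+1,0,β-1,1,δ-1,1,0)`. -/
theorem MI3 (n : ℕ) (β δ : ℤ) (hn : 1 ≤ n) (hβ : 1 ≤ β) (hδ : 2 ≤ δ) :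
    simplexMS n 0 β 1 (δ - 1) 0 0 = simplexMS (n + 1) 0 (β - 1) 1 (δ - 1) 1 0 :=
  MI3_general n β δ hn
end

section
/- MI4 (face reparametrization): For all integers n ≥ 1, β ≥ 1, and δ ≥ 1, the multiset identity S(n, 0, β, δ, δ, 0, 0) = S(n, (β−1)(δ−1), 1, δ, δ, 0, 0) holds. -/
theorem simplexMS_face_congr (n : ℕ) {α β α' β' : ℤ} (δ ε ζ : ℤ)
    (h : α + β * (δ - 1) = α' + β' * (δ - 1)) :
    simplexMS n α β δ δ ε ζ = simplexMS n α' β' δ δ ε ζ := by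
  simp only [simplexMS, Finset.Icc_self, Finset.singleton_val, Multiset.singleton_bind, h]

theorem MI4_general (n : ℕ) (β δ : ℤ) :
    simplexMS n 0 β δ δ 0 0 = simplexMS n ((β - 1) * (δ - 1)) 1 δ δ 0 0 :=
  simplexMS_face_congr n δ 0 0 (by ring)

/-- MI4 (face reparametrization): `S(n,0,β,δ,δ,0,0) = S(n,(β-1)(δ-1),1,δ,δ,0,0)`. -/
theorem MI4 (n : ℕ) (β δ : ℤ) (hn : 1 ≤ n) (hβ : 1 ≤ β) (hδ : 1 ≤ δ) :
    simplexMS n 0 β δ δ 0 0 = simplexMS n ((β - 1) * (δ - 1)) 1 δ δ 0 0 :=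
  MI4_general n β δ
end

section
/- MI5 (dimension-lowering identity): For all integers n ≥ 1, β ≥ 1, and δ ≥ 2, the multiset identity S(n+1, β−1, β−1, δ−1, δ−1, 0, 0) = S(n, (β−1)(δ−1), 1, 1, δ−1, 0, 0) holds. -/
/-
With `ε = ζ = 0` the constraint on `k₁` is `0 ≤ k₁ ≤ k`, so `k` just tops a chain of length
`n - 1`. Peeling off `k₁` from that chain on the left-hand side of MI5, whose `k` is pinned to
`δ - 2`, produces exactly the right-hand side with `k₁` playing the role of `k`.
-/

theorem chainZ_succ_map_add (m : ℕ) (top c : ℤ) :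
    (chainZ (m + 1) top).map (c + ·) =
      (Finset.Icc 0 top).val.bind fun v => (chainZ m v).map (c + v + ·) := by
  rw [chainZ, Multiset.map_bind]
  refine Multiset.bind_congr fun v _ => ?_
  rw [Multiset.map_map]
  exact Multiset.map_congr rfl fun t _ => by simp only [Function.comp_apply]; ring

theorem simplexMS_succ_zero_zero (m : ℕ) (α β γ δ : ℤ) :
    simplexMS (m + 1) α β γ δ 0 0 =
      (Finset.Icc (γ - 1) (δ - 1)).val.bind fun k => (chainZ m k).map (α + β * k + ·) := by
  refine Multiset.bind_congr fun k _ => ?_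
  cases m with
  | zero => simp [chainZ]
  | succ m =>
    simp only [add_eq_right, zero_mul, sub_zero,
      ← chainZ_succ_map_add]
    rfl

theorem MI5_general (n : ℕ) (β δ : ℤ) (hn : 1 ≤ n) :
    simplexMS (n + 1) (β - 1) (β - 1) (δ - 1) (δ - 1) 0 0 =
      simplexMS n ((β - 1) * (δ - 1)) 1 1 (δ - 1) 0 0 := by
  obtain ⟨m, rfl⟩ : ∃ m, n = m + 1 := ⟨n - 1, by omega⟩
  rw [simplexMS_succ_zero_zero, simplexMS_succ_zero_zero, Finset.Icc_self,
    Finset.singleton_val, Multiset.singleton_bind, chainZ_succ_map_add]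
  exact Multiset.bind_congr fun k _ => Multiset.map_congr rfl fun t _ => by ring

/-- MI5 (dimension-lowering identity):
`S(n+1,β-1,β-1,δ-1,δ-1,0,0) = S(n,(β-1)(δ-1),1,1,δ-1,0,0)`. -/
theorem MI5 (n : ℕ) (β δ : ℤ) (hn : 1 ≤ n) (hβ : 1 ≤ β) (hδ : 2 ≤ δ) :
    simplexMS (n + 1) (β - 1) (β - 1) (δ - 1) (δ - 1) 0 0 =
      simplexMS n ((β - 1) * (δ - 1)) 1 1 (δ - 1) 0 0 :=
  MI5_general n β δ hn
end

section
/- MI6 (inter-dimensional simplex duality): For all integers n ≥ 1, β ≥ 1, and δ ≥ 1, the multiset identity S(n, 0, β, 1, δ, 0, 0) ⊎ S(n+1, β−1, β−1, 1, δ−1, 0, 0) = S(n+1, 0, β−1, 1, δ−1, 0, 0) ⊎ S(n, (β−1)(δ−1), 1, 1, δ, 0, 0) holds. -/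
lemma Finset.Icc_val_eq_cons {a b : ℤ} (h : a ≤ b) :
    (Finset.Icc a b).val = b ::ₘ (Finset.Icc a (b - 1)).val := by
  rw [← Finset.insert_Icc_sub_one_right_eq_Icc h, Finset.insert_val_of_notMem (by simp)]

lemma chainZ_succ_of_neg (m : ℕ) {t : ℤ} (ht : t < 0) : chainZ (m + 1) t = 0 := by
  simp [chainZ, Finset.Icc_eq_empty_of_lt ht]

lemma chainZ_succ_of_nonneg (m : ℕ) {t : ℤ} (ht : 0 ≤ t) :
    chainZ (m + 1) t = (chainZ m t).map (t + ·) + chainZ (m + 1) (t - 1) := by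
  rw [chainZ, Finset.Icc_val_eq_cons ht, Multiset.cons_bind]
  simp only [add_comm _ t]
  rfl

noncomputable def weightedChainZ (m : ℕ) (β δ : ℤ) : Multiset ℤ :=
  (Finset.Icc 0 (δ - 1)).val.bind fun k => (chainZ m k).map (β * k + ·)

lemma weightedChainZ_of_nonpos (m : ℕ) (β : ℤ) {δ : ℤ} (hδ : δ ≤ 0) :
    weightedChainZ m β δ = 0 := by
  simp [weightedChainZ, Finset.Icc_eq_empty_of_lt (by omega : δ - 1 < 0)]

lemma weightedChainZ_add_one_of_nonneg (m : ℕ) (β : ℤ) {δ : ℤ} (hδ : 0 ≤ δ) :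
    weightedChainZ m β (δ + 1) =
      weightedChainZ m β δ + (chainZ m δ).map (β * δ + ·) := by
  rw [weightedChainZ, add_sub_cancel_right, Finset.Icc_val_eq_cons hδ, Multiset.cons_bind,
    add_comm]
  rfl

lemma weightedChainZ_succ_add_one (m : ℕ) (β δ : ℤ) :
    weightedChainZ (m + 1) β (δ + 1) =
      weightedChainZ (m + 1) β δ + (chainZ (m + 1) δ).map (β * δ + ·) := by
  rcases le_or_gt 0 δ with hδ | hδ
  · exact weightedChainZ_add_one_of_nonneg _ _ hδ
  · rw [weightedChainZ_of_nonpos _ _ (by omega), weightedChainZ_of_nonpos _ _ hδ.le,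
      chainZ_succ_of_neg _ hδ, Multiset.map_zero, add_zero]

lemma weightedChainZ_one (m : ℕ) (δ : ℤ) : weightedChainZ m 1 δ = chainZ (m + 1) (δ - 1) := by
  simp only [weightedChainZ, chainZ, one_mul, add_comm]

lemma simplexMS_eq_map_weightedChainZ {n : ℕ} (hn : 1 ≤ n) (α β δ : ℤ) :
    simplexMS n α β 1 δ 0 0 = (weightedChainZ (n - 1) β δ).map (α + ·) := by
  rw [simplexMS, weightedChainZ, sub_self, Multiset.map_bind]
  refine Multiset.bind_congr fun k _ => ?_
  obtain _ | _ | m := n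
  · omega
  · simp [chainZ]
  · simp only [chainZ, add_tsub_cancel_right, zero_mul, sub_zero, Multiset.map_bind,
      Multiset.map_map, Nat.add_eq_right]
    refine Multiset.bind_congr fun j _ => Multiset.map_congr rfl fun t _ => ?_
    simp only [Function.comp_apply]
    ring

lemma weightedChainZ_succ (m : ℕ) (β δ : ℤ) :
    weightedChainZ (m + 1) β δ =
      weightedChainZ m (β + 1) δ + (weightedChainZ (m + 1) β (δ - 1)).map (β + ·) := by
  rcases lt_or_ge δ 0 with hδ | hδ
  · simp [weightedChainZ_of_nonpos _ _ hδ.le, weightedChainZ_of_nonpos _ _ (by omega : δ - 1 ≤ 0)]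
  induction δ, hδ using Int.leInduction with
  | base => simp [weightedChainZ_of_nonpos]
  | succ δ hδ ih =>
    have hsplit : weightedChainZ (m + 1) β δ =
        weightedChainZ (m + 1) β (δ - 1) + (chainZ (m + 1) (δ - 1)).map (β * (δ - 1) + ·) := by
      simpa using weightedChainZ_succ_add_one m β (δ - 1)
    rw [add_sub_cancel_right, weightedChainZ_succ_add_one, chainZ_succ_of_nonneg _ hδ,
      weightedChainZ_add_one_of_nonneg _ _ hδ]
    conv_lhs => rw [ih]
    rw [hsplit]
    simp only [Multiset.map_add, Multiset.map_map, comp_add_left, add_mul, one_mul, mul_sub,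
      mul_one, add_sub_cancel]
    abel

theorem MI6_general (n : ℕ) (β δ : ℤ) (hn : 1 ≤ n) :
    simplexMS n 0 β 1 δ 0 0 + simplexMS (n + 1) (β - 1) (β - 1) 1 (δ - 1) 0 0 =
      simplexMS (n + 1) 0 (β - 1) 1 (δ - 1) 0 0 +
        simplexMS n ((β - 1) * (δ - 1)) 1 1 δ 0 0 := by
  obtain ⟨m, rfl⟩ : ∃ m, n = m + 1 := ⟨n - 1, by omega⟩
  simp only [simplexMS_eq_map_weightedChainZ (Nat.le_add_left 1 _), Nat.add_sub_cancel,
    weightedChainZ_one, zero_add, Multiset.map_id']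
  rw [← weightedChainZ_succ_add_one, sub_add_cancel, weightedChainZ_succ m (β - 1) δ,
    sub_add_cancel]

/-- MI6 (inter-dimensional simplex duality):
`S(n,0,β,1,δ,0,0) ⊎ S(n+1,β-1,β-1,1,δ-1,0,0)
  = S(n+1,0,β-1,1,δ-1,0,0) ⊎ S(n,(β-1)(δ-1),1,1,δ,0,0)`. -/
theorem MI6 (n : ℕ) (β δ : ℤ) (hn : 1 ≤ n) (hβ : 1 ≤ β) (hδ : 1 ≤ δ) :
    simplexMS n 0 β 1 δ 0 0 + simplexMS (n + 1) (β - 1) (β - 1) 1 (δ - 1) 0 0 =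
      simplexMS (n + 1) 0 (β - 1) 1 (δ - 1) 0 0 +
        simplexMS n ((β - 1) * (δ - 1)) 1 1 δ 0 0 :=
  MI6_general n β δ hn
end

section
/- Generating-function form of the inter-dimensional simplex duality MI6: For every commutative ring R, every x ∈ R, and all integers n ≥ 1, β ≥ 1, δ ≥ 1, the following identity holds: the sum of x^{βk + k₁ + ⋯ + k_{n−1}} over all integer tuples with 0 ≤ k_{n−1} ≤ ⋯ ≤ k₁ ≤ k ≤ δ−1, plus the sum of x^{(β−1)(k+1) + k₁ + ⋯ + k_n} over all integer tuples with 0 ≤ k_n ≤ ⋯ ≤ k₁ ≤ k ≤ δ−2, equals the sum of x^{(β−1)k + k₁ + ⋯ + k_n} over all integer tuples with 0 ≤ k_n ≤ ⋯ ≤ k₁ ≤ k ≤ δ−2, plus the sum of x^{(β−1)(δ−1) + k + k₁ + ⋯ + k_{n−1}} over all integer tuples with 0 ≤ k_{n−1} ≤ ⋯ ≤ k₁ ≤ k ≤ δ−1. (For n = 1 the tuples in the first and last sums consist of k alone, and the middle sums are over pairs (k, k₁).) -/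
/-! Write `b = β - 1`, `m = n - 1`, `d = δ - 1` and `C_j = chainSum x j`. Then `C_{m+1}` is the
sequence of partial sums of `x^k C_m(k)`, the first sum is `∑_{k ≤ d} x^{bk} · x^k C_m(k)` and the
last one is `x^{bd} C_{m+1}(d)`, so the identity is Abel summation against the weights `x^{bk}`. -/

/-- `chainSum x m top = ∑ x^(k₁+⋯+k_m)` over integer chains `0 ≤ k_m ≤ ⋯ ≤ k₁ ≤ top`
(for `m = 0` the sum is `1 = x^0`, over the unique empty chain). -/
def chainSum {R : Type*} [CommRing R] (x : R) : ℕ → ℕ → R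
  | 0, _ => 1
  | m + 1, top => ∑ v ∈ Finset.range (top + 1), x ^ v * chainSum x m v

open Finset

theorem sum_range_succ_mul_add_sum_range_mul_partialSum {R : Type*} [Semiring R]
    (w a : ℕ → R) (d : ℕ) :
    ∑ k ∈ range (d + 1), w k * a k + ∑ k ∈ range d, w (k + 1) * ∑ i ∈ range (k + 1), a i =
      ∑ k ∈ range d, w k * ∑ i ∈ range (k + 1), a i + w d * ∑ i ∈ range (d + 1), a i := by
  induction d with
  | zero => simp
  | succ d ih =>
    rw [sum_range_succ (fun k => w k * a k) (d + 1), sum_range_succ (fun k => w (k + 1) * _) d,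
      sum_range_succ (fun k => w k * ∑ i ∈ range (k + 1), a i) d, sum_range_succ a (d + 1), mul_add,
      add_add_add_comm, ih]
    abel

theorem chainSum_succ {R : Type*} [CommRing R] (x : R) (m top : ℕ) :
    chainSum x (m + 1) top = ∑ v ∈ range (top + 1), x ^ v * chainSum x m v := rfl

theorem sum_range_pow_add_mul_chainSum {R : Type*} [CommRing R] (x : R) (m e d : ℕ) :
    ∑ k ∈ range (d + 1), x ^ (e + k) * chainSum x m k = x ^ e * chainSum x (m + 1) d := by
  simp only [chainSum_succ, mul_sum, pow_add, mul_assoc]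

theorem MI6_generating_function_general (R : Type*) [CommRing R] (x : R) (n β δ : ℕ)
    (hn : 1 ≤ n) (hβ : 1 ≤ β) :
    (∑ k ∈ Finset.range δ, x ^ (β * k) * chainSum x (n - 1) k) +
      (∑ k ∈ Finset.range (δ - 1), x ^ ((β - 1) * (k + 1)) * chainSum x n k) =
    (∑ k ∈ Finset.range (δ - 1), x ^ ((β - 1) * k) * chainSum x n k) +
      (∑ k ∈ Finset.range δ, x ^ ((β - 1) * (δ - 1) + k) * chainSum x (n - 1) k) := by
  obtain ⟨m, rfl⟩ := Nat.exists_eq_add_of_le' hn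
  obtain ⟨b, rfl⟩ := Nat.exists_eq_add_of_le' hβ
  cases δ with
  | zero => simp
  | succ d =>
    simp only [add_tsub_cancel_right, sum_range_pow_add_mul_chainSum]
    have split_weight : ∀ k, x ^ ((b + 1) * k) * chainSum x m k =
        x ^ (b * k) * (x ^ k * chainSum x m k) := fun k => by ring
    simp only [split_weight]
    exact sum_range_succ_mul_add_sum_range_mul_partialSum (fun k => x ^ (b * k))
      (fun k => x ^ k * chainSum x m k) d

/-- Generating-function form of the inter-dimensional simplex duality MI6:
`∑ x^(βk + k₁+⋯+k_{n-1})` over `0 ≤ k_{n-1} ≤ ⋯ ≤ k₁ ≤ k ≤ δ-1`, plus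
`∑ x^((β-1)(k+1) + k₁+⋯+k_n)` over `0 ≤ k_n ≤ ⋯ ≤ k₁ ≤ k ≤ δ-2`, equals
`∑ x^((β-1)k + k₁+⋯+k_n)` over `0 ≤ k_n ≤ ⋯ ≤ k₁ ≤ k ≤ δ-2`, plus
`∑ x^((β-1)(δ-1) + k + k₁+⋯+k_{n-1})` over `0 ≤ k_{n-1} ≤ ⋯ ≤ k₁ ≤ k ≤ δ-1`. -/
theorem MI6_generating_function (R : Type*) [CommRing R] (x : R) (n β δ : ℕ)
    (hn : 1 ≤ n) (hβ : 1 ≤ β) (hδ : 1 ≤ δ) :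
    (∑ k ∈ Finset.range δ, x ^ (β * k) * chainSum x (n - 1) k) +
      (∑ k ∈ Finset.range (δ - 1), x ^ ((β - 1) * (k + 1)) * chainSum x n k) =
    (∑ k ∈ Finset.range (δ - 1), x ^ ((β - 1) * k) * chainSum x n k) +
      (∑ k ∈ Finset.range δ, x ^ ((β - 1) * (δ - 1) + k) * chainSum x (n - 1) k) :=
  MI6_generating_function_general R x n β δ hn hβ
end

section
/- Stage-2 Neville elimination closed form: For all indices 2 ≤ i, j ≤ n, the stage-2 matrix of the Neville elimination of V satisfies U(2)_{i,j} = σ² η^{(i−j)²} (1 − η^{2(i−1)(j−1)}). -/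
/-- The Gaussian-covariance kernel on 1-based indices:
`V σ θ δ i j = σ² e^{-θ (i-j)² δ²}`. -/
noncomputable def gaussV (σ θ δ : ℝ) (i j : ℕ) : ℝ :=
  σ ^ 2 * Real.exp (-θ * ((i : ℝ) - (j : ℝ)) ^ 2 * δ ^ 2)

/-- `nevilleU σ θ δ t` is the stage-`(t+1)` matrix `U(t+1)` (on 1-based indices) of the
Neville elimination of the Gaussian-covariance matrix: `U(1) = V`, and `U(s+1)` agrees
with `U(s)` in rows `1, …, s`, while for `i ≥ s + 1` one has `U(s+1)_{i,j} = 0` for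
`j ≤ s` and `U(s+1)_{i,j} = U(s)_{i,j} - U(s)_{i,s} U(s)_{s,j} / U(s)_{s,s}` for
`j ≥ s + 1`. -/
noncomputable def nevilleU (σ θ δ : ℝ) : ℕ → ℕ → ℕ → ℝ
  | 0, i, j => gaussV σ θ δ i j
  | t + 1, i, j =>
    if i ≤ t + 1 then nevilleU σ θ δ t i j
    else if j ≤ t + 1 then 0
    else nevilleU σ θ δ t i j -
      nevilleU σ θ δ t i (t + 1) * nevilleU σ θ δ t (t + 1) j /
        nevilleU σ θ δ t (t + 1) (t + 1)

/-! With `η = e^{-θδ²}` the kernel is `V i j = σ² η^{(i-j)²}`, and the first elimination step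
subtracts `V i 1 V 1 j / V 1 1 = σ² η^{(i-1)² + (j-1)²}`. The identity
`(i-1)² + (j-1)² = (i-j)² + 2(i-1)(j-1)` turns this into `V i j · η^{2(i-1)(j-1)}`. -/

lemma Real.exp_int_mul (x : ℝ) (m : ℤ) : Real.exp (m * x) = Real.exp x ^ m := by
  rw [mul_comm, Real.exp_mul, Real.rpow_intCast]

section gaussV

variable (σ θ δ : ℝ)

lemma gaussV_eq_zpow (i j : ℕ) :
    gaussV σ θ δ i j = σ ^ 2 * Real.exp (-θ * δ ^ 2) ^ (((i : ℤ) - (j : ℤ)) ^ 2) := by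
  rw [gaussV, ← Real.exp_int_mul]
  push_cast
  ring_nf

lemma gaussV_one_one : gaussV σ θ δ 1 1 = σ ^ 2 := by
  simp [gaussV]

lemma gaussV_mul_gaussV_div_gaussV_one_one {i j : ℕ} (hi : 1 ≤ i) (hj : 1 ≤ j) :
    gaussV σ θ δ i 1 * gaussV σ θ δ 1 j / gaussV σ θ δ 1 1 =
      gaussV σ θ δ i j * Real.exp (-θ * δ ^ 2) ^ (2 * (i - 1) * (j - 1)) := by
  have hexp : -θ * ((i : ℝ) - 1) ^ 2 * δ ^ 2 + -θ * (1 - (j : ℝ)) ^ 2 * δ ^ 2 =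
      -θ * ((i : ℝ) - j) ^ 2 * δ ^ 2 + ((2 * (i - 1) * (j - 1) : ℕ) : ℝ) * (-θ * δ ^ 2) := by
    push_cast [hi, hj]
    ring
  rw [gaussV_one_one, ← Real.exp_nat_mul]
  simp only [gaussV, Nat.cast_one]
  calc _ = σ ^ 2 * σ ^ 2 / σ ^ 2 * Real.exp (-θ * ((i : ℝ) - 1) ^ 2 * δ ^ 2 +
        -θ * (1 - (j : ℝ)) ^ 2 * δ ^ 2) := by rw [Real.exp_add]; ring
    _ = _ := by rw [mul_self_div_self, hexp, Real.exp_add]; ring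

end gaussV

lemma nevilleU_zero (σ θ δ : ℝ) : nevilleU σ θ δ 0 = gaussV σ θ δ := rfl

lemma nevilleU_succ_of_lt (σ θ δ : ℝ) {t i j : ℕ} (hi : t + 1 < i) (hj : t + 1 < j) :
    nevilleU σ θ δ (t + 1) i j = nevilleU σ θ δ t i j -
      nevilleU σ θ δ t i (t + 1) * nevilleU σ θ δ t (t + 1) j /
        nevilleU σ θ δ t (t + 1) (t + 1) := by
  rw [nevilleU, if_neg hi.not_ge, if_neg hj.not_ge]

theorem neville_stage_two_general (σ θ δ : ℝ) (i j : ℕ)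
    (hi2 : 2 ≤ i) (hj2 : 2 ≤ j) :
    nevilleU σ θ δ 1 i j =
      σ ^ 2 * Real.exp (-θ * δ ^ 2) ^ (((i : ℤ) - (j : ℤ)) ^ 2) *
        (1 - Real.exp (-θ * δ ^ 2) ^ (2 * (i - 1) * (j - 1))) := by
  rw [nevilleU_succ_of_lt σ θ δ hi2 hj2, nevilleU_zero,
    gaussV_mul_gaussV_div_gaussV_one_one σ θ δ (by omega) (by omega), gaussV_eq_zpow]
  ring

/-- Stage-2 Neville elimination closed form: for `2 ≤ i, j ≤ n`,
`U(2)_{i,j} = σ² η^{(i-j)²} (1 - η^{2(i-1)(j-1)})`, where `η = e^{-θδ²}`. -/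
theorem neville_stage_two (n : ℕ) (σ θ δ : ℝ) (hn : 1 ≤ n)
    (hσ : 0 < σ) (hθ : 0 < θ) (hδ : 0 < δ) (i j : ℕ)
    (hi2 : 2 ≤ i) (hin : i ≤ n) (hj2 : 2 ≤ j) (hjn : j ≤ n) :
    nevilleU σ θ δ 1 i j =
      σ ^ 2 * Real.exp (-θ * δ ^ 2) ^ (((i : ℤ) - (j : ℤ)) ^ 2) *
        (1 - Real.exp (-θ * δ ^ 2) ^ (2 * (i - 1) * (j - 1))) :=
  neville_stage_two_general σ θ δ i j hi2 hj2
end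

section
/- Pivot formula for Neville elimination of the Gaussian-covariance matrix: For every 1 ≤ s ≤ n, the stage-s pivot satisfies U(s)_{s,s} = σ² ∏_{q=1}^{s−1} (1 − η^{2q}) (the empty product for s = 1 being 1); in particular every pivot U(s)_{s,s} is strictly positive. -/
open Finset

section CompleteHomogeneous

variable {R : Type*} [CommRing R]

def completeHomogeneous : List R → ℕ → R
  | _, 0 => 1
  | [], _ + 1 => 0
  | a :: l, m + 1 => a * completeHomogeneous (a :: l) m + completeHomogeneous l (m + 1)
  termination_by l m => (l.length, m)

@[simp]
theorem completeHomogeneous_zero (l : List R) : completeHomogeneous l 0 = 1 := by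
  cases l <;> rw [completeHomogeneous]

theorem completeHomogeneous_cons_succ (a : R) (l : List R) (m : ℕ) :
    completeHomogeneous (a :: l) (m + 1) =
      a * completeHomogeneous (a :: l) m + completeHomogeneous l (m + 1) := by
  rw [completeHomogeneous]

theorem completeHomogeneous_singleton (a : R) (m : ℕ) : completeHomogeneous [a] m = a ^ m := by
  induction m with
  | zero => simp
  | succ m ih => rw [completeHomogeneous_cons_succ, ih, completeHomogeneous, add_zero, pow_succ']

theorem completeHomogeneous_cons_sub_cons (u v : R) (l : List R) (m : ℕ) :
    completeHomogeneous (u :: l) (m + 1) - completeHomogeneous (v :: l) (m + 1) =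
      (u - v) * completeHomogeneous (u :: v :: l) m := by
  induction m with
  | zero => simp only [completeHomogeneous_cons_succ, completeHomogeneous_zero]; ring
  | succ m ih =>
    rw [completeHomogeneous_cons_succ u l, completeHomogeneous_cons_succ v l,
      completeHomogeneous_cons_succ u (v :: l)]
    linear_combination u * ih

end CompleteHomogeneous

section NevilleElim

variable {K : Type*} [Field K]

def nevilleElim (A : ℕ → ℕ → K) : ℕ → ℕ → ℕ → K
  | 0, i, j => A i j
  | t + 1, i, j =>
    if i ≤ t + 1 then nevilleElim A t i j
    else if j ≤ t + 1 then 0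
    else nevilleElim A t i j -
      nevilleElim A t i (t + 1) * nevilleElim A t (t + 1) j / nevilleElim A t (t + 1) (t + 1)

theorem nevilleElim_succ_of_lt (A : ℕ → ℕ → K) {t i j : ℕ} (hi : t + 1 < i)
    (hj : t + 1 < j) :
    nevilleElim A (t + 1) i j = nevilleElim A t i j -
      nevilleElim A t i (t + 1) * nevilleElim A t (t + 1) j / nevilleElim A t (t + 1) (t + 1) := by
  rw [nevilleElim, if_neg hi.not_ge, if_neg hj.not_ge]

theorem nevilleElim_mul_mul (A : ℕ → ℕ → K) {r c : ℕ → K} (hr : ∀ i, r i ≠ 0)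
    (hc : ∀ j, c j ≠ 0) (t i j : ℕ) :
    nevilleElim (fun i j => r i * c j * A i j) t i j = r i * c j * nevilleElim A t i j := by
  induction t generalizing i j with
  | zero => rfl
  | succ t ih =>
    simp only [nevilleElim, ih]
    split_ifs
    · rfl
    · simp
    · have hrc : r (t + 1) * c (t + 1) ≠ 0 := mul_ne_zero (hr _) (hc _)
      rw [← mul_div_mul_left (nevilleElim A t i (t + 1) * nevilleElim A t (t + 1) j)
        (nevilleElim A t (t + 1) (t + 1)) hrc]
      ring

theorem nevilleElim_pow {x : ℕ → K} (hx₀ : ∀ k, x k ≠ 0) (hx : Function.Injective x)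
    {t i j : ℕ} (hi : t + 1 ≤ i) (hj : t + 1 ≤ j) :
    nevilleElim (fun i j => x i ^ j) t i j = x i * (∏ q ∈ Icc 1 t, (x i - x q)) *
      completeHomogeneous (x i :: (List.range' 1 t).reverse.map x) (j - (t + 1)) := by
  induction t generalizing i j with
  | zero =>
    obtain ⟨m, rfl⟩ : ∃ m, j = m + 1 := ⟨j - 1, by omega⟩
    simp [nevilleElim, completeHomogeneous_singleton, pow_succ']
  | succ t ih =>
    obtain ⟨m, rfl⟩ : ∃ m, j = t + 2 + m := ⟨j - (t + 2), by omega⟩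
    have hpivot : x (t + 1) * ∏ q ∈ Icc 1 t, (x (t + 1) - x q) ≠ 0 := by
      refine mul_ne_zero (hx₀ _) (prod_ne_zero_iff.2 fun q hq => sub_ne_zero.2 fun h => ?_)
      have := hx h
      have := mem_Icc.1 hq
      omega
    have hlist : (List.range' 1 (t + 1)).reverse.map x =
        x (t + 1) :: (List.range' 1 t).reverse.map x := by
      simp [List.range'_concat, add_comm]
    rw [nevilleElim_succ_of_lt _ (by omega) (by omega), ih (by omega) (by omega),
      ih (by omega) le_rfl, ih le_rfl (by omega), ih le_rfl le_rfl,
      show t + 2 + m - (t + 1) = m + 1 by omega, Nat.sub_self,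
      show t + 2 + m - (t + 1 + 1) = m by omega, completeHomogeneous_zero,
      completeHomogeneous_zero, mul_one, mul_one, mul_div_assoc, mul_div_cancel_left₀ _ hpivot,
      prod_Icc_succ_top (by omega), hlist]
    linear_combination (x i * ∏ q ∈ Icc 1 t, (x i - x q)) *
      completeHomogeneous_cons_sub_cons (x i) (x (t + 1)) ((List.range' 1 t).reverse.map x) m

end NevilleElim

theorem Finset.prod_Icc_reflect {M : Type*} [CommMonoid M] (f : ℕ → M) (t : ℕ) :
    ∏ q ∈ Icc 1 t, f (t + 1 - q) = ∏ q ∈ Icc 1 t, f q := by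
  rw [← Finset.Ico_add_one_right_eq_Icc, prod_Ico_reflect f 1 (Nat.le_succ _)]
  simp

theorem prod_pow_sub_pow {K : Type*} [Field K] {b : K} (hb : b ≠ 0) (t : ℕ) :
    ∏ q ∈ Icc 1 t, (b ^ (t + 1) - b ^ q) =
      b ^ ((t + 1) * t) * ∏ q ∈ Icc 1 t, (1 - b⁻¹ ^ q) := by
  have hfactor : ∀ q ∈ Icc 1 t,
      b ^ (t + 1) - b ^ q = b ^ (t + 1) * (1 - b⁻¹ ^ (t + 1 - q)) := by
    intro q hq
    have hsplit : b ^ (t + 1) = b ^ q * b ^ (t + 1 - q) := by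
      rw [← pow_add, Nat.add_sub_cancel' (by have := mem_Icc.1 hq; omega)]
    rw [hsplit, inv_pow]
    field_simp
  rw [prod_congr rfl hfactor, prod_mul_distrib, prod_const, Nat.card_Icc, Nat.add_sub_cancel,
    ← pow_mul, prod_Icc_reflect (fun q => 1 - b⁻¹ ^ q)]

theorem nevilleU_eq_nevilleElim (σ θ δ : ℝ) :
    nevilleU σ θ δ = nevilleElim (gaussV σ θ δ) := by
  funext t i j
  induction t generalizing i j with
  | zero => rfl
  | succ t ih => simp only [nevilleU, nevilleElim, ih]

theorem gaussV_eq_mul_pow (σ θ δ : ℝ) :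
    gaussV σ θ δ = fun i j =>
      σ ^ 2 * Real.exp (-θ * δ ^ 2) ^ i ^ 2 * Real.exp (-θ * δ ^ 2) ^ j ^ 2 *
        ((Real.exp (-θ * δ ^ 2) ^ 2)⁻¹ ^ i) ^ j := by
  funext i j
  simp only [gaussV, ← Real.exp_neg, ← Real.exp_nat_mul, mul_assoc, ← Real.exp_add]
  push_cast
  ring_nf

theorem nevilleU_pivot {σ θ δ : ℝ} (hσ : σ ≠ 0) (hθδ : θ * δ ^ 2 ≠ 0) (t : ℕ) :
    nevilleU σ θ δ t (t + 1) (t + 1) =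
      σ ^ 2 * ∏ q ∈ Icc 1 t, (1 - Real.exp (-θ * δ ^ 2) ^ (2 * q)) := by
  set η := Real.exp (-θ * δ ^ 2) with hη_def
  have hη : η ≠ 0 := (Real.exp_pos _).ne'
  have hη2 : η ^ 2 ≠ 1 := by
    rw [← Real.exp_nat_mul, Ne, Real.exp_eq_one_iff]
    simpa using hθδ
  have hnodes : Function.Injective fun k : ℕ => (η ^ 2)⁻¹ ^ k :=
    pow_right_injective₀ (by positivity) (inv_ne_one.2 hη2)
  rw [nevilleU_eq_nevilleElim, gaussV_eq_mul_pow,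
    nevilleElim_mul_mul _ (fun i => by positivity) (fun j => by positivity),
    nevilleElim_pow (fun k => by positivity) hnodes le_rfl le_rfl, Nat.sub_self,
    completeHomogeneous_zero, mul_one, prod_pow_sub_pow (by positivity), inv_inv]
  have hcancel : η ^ (t + 1) ^ 2 * η ^ (t + 1) ^ 2 *
      ((η ^ 2)⁻¹ ^ (t + 1) * ((η ^ 2)⁻¹ ^ (t + 1)) ^ t) = 1 := by
    rw [← pow_succ', ← pow_mul, inv_pow, ← pow_mul, ← pow_add,
      show (t + 1) ^ 2 + (t + 1) ^ 2 = 2 * ((t + 1) * (t + 1)) by ring,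
      mul_inv_cancel₀ (pow_ne_zero _ hη)]
  simp_rw [← hη_def, pow_mul η 2]
  linear_combination (σ ^ 2 * ∏ q ∈ Icc 1 t, (1 - (η ^ 2) ^ q)) * hcancel

theorem neville_pivots_general (σ θ δ : ℝ)
    (hσ : 0 < σ) (hθ : 0 < θ) (hδ : 0 < δ) (s : ℕ) (hs1 : 1 ≤ s) :
    nevilleU σ θ δ (s - 1) s s =
      σ ^ 2 * ∏ q ∈ Finset.Icc 1 (s - 1), (1 - Real.exp (-θ * δ ^ 2) ^ (2 * q)) ∧
    0 < nevilleU σ θ δ (s - 1) s s := by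
  obtain ⟨t, rfl⟩ : ∃ t, s = t + 1 := ⟨s - 1, by omega⟩
  have hθδ : 0 < θ * δ ^ 2 := by positivity
  have hpivot := nevilleU_pivot hσ.ne' hθδ.ne' t
  have hη : Real.exp (-θ * δ ^ 2) < 1 := Real.exp_lt_one_iff.2 (by linarith)
  rw [Nat.add_sub_cancel, hpivot]
  refine ⟨rfl, mul_pos (by positivity) (prod_pos fun q hq => sub_pos.2 ?_)⟩
  exact pow_lt_one₀ (Real.exp_pos _).le hη (by have := mem_Icc.1 hq; omega)

/-- Pivot formula for Neville elimination of the Gaussian-covariance matrix: for every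
`1 ≤ s ≤ n`, `U(s)_{s,s} = σ² ∏_{q=1}^{s-1} (1 - η^{2q})` where `η = e^{-θδ²}`
(the empty product for `s = 1` being `1`); in particular every pivot is positive. -/
theorem neville_pivots (n : ℕ) (σ θ δ : ℝ) (hn : 1 ≤ n)
    (hσ : 0 < σ) (hθ : 0 < θ) (hδ : 0 < δ) (s : ℕ) (hs1 : 1 ≤ s) (hsn : s ≤ n) :
    nevilleU σ θ δ (s - 1) s s =
      σ ^ 2 * ∏ q ∈ Finset.Icc 1 (s - 1), (1 - Real.exp (-θ * δ ^ 2) ^ (2 * q)) ∧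
    0 < nevilleU σ θ δ (s - 1) s s :=
  neville_pivots_general σ θ δ hσ hθ hδ s hs1
end

section
/- Lemma, Part b (factorization of the determinant of the 1D Gaussian-covariance matrix): det(V) = σ^{2n} ∏_{s=2}^{n} ∏_{x=1}^{s−1} (1 − e^{−2xθδ²}). -/
/-!
Write `c = θδ²`. Since `-c(i-j)² = -ci² + 2cij - cj²`, the matrix `V/σ²` is the Vandermonde
matrix of the nodes `e^{2ci}` scaled on both sides by `diag(e^{-ci²})`. For `i < j` the
Vandermonde factor is `e^{2cj} - e^{2ci} = e^{2cj}(1 - e^{-2c(j-i)})`; the prefactors `e^{2cj}`,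
taken over all pairs, give `e^{2c∑ j²}` and cancel the two diagonal scalings. Regrouping the
pairs by `s = j + 1` and `x = j - i` gives the double product.
-/

open Finset Matrix Real

section CombinatorialProducts

variable {M : Type*} [CommMonoid M]

theorem Fin.prod_Ioi_eq_prod_range_prod_range (n : ℕ) (g : ℕ → ℕ → M) :
    ∏ i : Fin n, ∏ j ∈ Ioi i, g i j = ∏ j ∈ range n, ∏ i ∈ range j, g i j := by
  rw [prod_comm' (s' := fun j => Iio j) (t' := univ) (by simp [and_comm]),
    ← Fin.prod_univ_eq_prod_range (fun j => ∏ i ∈ range j, g i j)]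
  refine prod_congr rfl fun j _ => ?_
  rw [← Nat.Iio_eq_range, ← Fin.map_valEmbedding_Iio, prod_map]
  rfl

theorem prod_range_sub_eq_prod_Icc (f : ℕ → M) (j : ℕ) :
    ∏ i ∈ range j, f (j - i) = ∏ x ∈ Icc 1 j, f x := by
  induction j with
  | zero => simp
  | succ j ih => rw [prod_range_succ', prod_Icc_succ_top (by omega), ← ih]; simp

theorem prod_range_prod_range_sub_eq_prod_Icc_prod_Icc (f : ℕ → M) (n : ℕ) :
    ∏ j ∈ range n, ∏ i ∈ range j, f (j - i) =
      ∏ s ∈ Icc 2 n, ∏ x ∈ Icc 1 (s - 1), f x := by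
  induction n with
  | zero => simp
  | succ n ih =>
    rcases Nat.eq_zero_or_pos n with rfl | hn
    · simp
    rw [prod_range_succ, ih, prod_Icc_succ_top (by omega), prod_range_sub_eq_prod_Icc]
    rfl

end CombinatorialProducts

theorem det_vandermonde_exp_mul (b : ℝ) (n : ℕ) :
    (vandermonde fun i : Fin n => exp (b * i)).det =
      exp (b * ∑ j ∈ range n, (j : ℝ) ^ 2) *
        ∏ s ∈ Icc 2 n, ∏ x ∈ Icc 1 (s - 1), (1 - exp (-(b * x))) := by
  have hfactor : ∀ j, ∀ i ∈ range j,
      exp (b * j) - exp (b * i) = exp (b * j) * (1 - exp (-(b * (j - i : ℕ)))) := by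
    intro j i hi
    rw [Nat.cast_sub (mem_range.mp hi).le, mul_sub, mul_one, ← exp_add]
    ring_nf
  have hdiag : ∏ j ∈ range n, exp (b * j) ^ j = exp (b * ∑ j ∈ range n, (j : ℝ) ^ 2) := by
    rw [mul_sum, exp_sum]
    refine prod_congr rfl fun j _ => ?_
    rw [← exp_nat_mul]
    ring_nf
  rw [det_vandermonde,
    Fin.prod_Ioi_eq_prod_range_prod_range n fun i j => exp (b * j) - exp (b * i),
    prod_congr rfl fun j _ => prod_congr rfl (hfactor j)]
  simp only [prod_mul_distrib, prod_const, card_range]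
  rw [hdiag, prod_range_prod_range_sub_eq_prod_Icc_prod_Icc fun x => 1 - exp (-(b * x))]

noncomputable def gaussianKernelMatrix (n : ℕ) (c : ℝ) : Matrix (Fin n) (Fin n) ℝ :=
  of fun i j => exp (-c * ((i : ℝ) - j) ^ 2)

theorem gaussianKernelMatrix_eq_diagonal_mul_vandermonde_mul_diagonal (n : ℕ) (c : ℝ) :
    gaussianKernelMatrix n c =
      diagonal (fun i : Fin n => exp (-c * (i : ℝ) ^ 2)) *
        vandermonde (fun i => exp (2 * c * i)) *
        diagonal (fun i : Fin n => exp (-c * (i : ℝ) ^ 2)) := by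
  ext i j
  simp only [gaussianKernelMatrix, of_apply, mul_diagonal, diagonal_mul, vandermonde_apply,
    ← exp_nat_mul, ← exp_add]
  ring_nf

theorem det_gaussianKernelMatrix (n : ℕ) (c : ℝ) :
    (gaussianKernelMatrix n c).det =
      ∏ s ∈ Icc 2 n, ∏ x ∈ Icc 1 (s - 1), (1 - exp (-(2 * c * x))) := by
  have hcancel : (∏ i ∈ range n, exp (-c * (i : ℝ) ^ 2)) ^ 2 *
      exp (2 * c * ∑ j ∈ range n, (j : ℝ) ^ 2) = 1 := by
    rw [← exp_sum, ← exp_nat_mul, ← exp_add, mul_sum, mul_sum, ← sum_add_distrib,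
      sum_eq_zero fun i _ => by push_cast; ring, exp_zero]
  rw [gaussianKernelMatrix_eq_diagonal_mul_vandermonde_mul_diagonal, det_mul, det_mul,
    det_diagonal, det_vandermonde_exp_mul,
    Fin.prod_univ_eq_prod_range (fun i => exp (-c * (i : ℝ) ^ 2))]
  linear_combination
    (∏ s ∈ Icc 2 n, ∏ x ∈ Icc 1 (s - 1), (1 - exp (-(2 * c * x)))) * hcancel

theorem det_gaussian_cov_factorization_general (n : ℕ) (σ θ δ : ℝ) :
    (Matrix.of fun i j : Fin n =>
        σ ^ 2 * Real.exp (-θ * ((i : ℝ) - (j : ℝ)) ^ 2 * δ ^ 2)).det =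
      σ ^ (2 * n) *
        ∏ s ∈ Finset.Icc 2 n, ∏ x ∈ Finset.Icc 1 (s - 1),
          (1 - Real.exp (-(2 * (x : ℝ)) * θ * δ ^ 2)) := by
  have hscale : (of fun i j : Fin n => σ ^ 2 * exp (-θ * ((i : ℝ) - j) ^ 2 * δ ^ 2)) =
      σ ^ 2 • gaussianKernelMatrix n (θ * δ ^ 2) := by
    ext i j
    simp only [gaussianKernelMatrix, Matrix.smul_apply, of_apply, smul_eq_mul]
    ring_nf
  rw [hscale, det_smul, det_gaussianKernelMatrix, Fintype.card_fin, pow_mul]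
  congr! 5
  ring

/-- Lemma, Part b (factorization of the determinant of the 1D Gaussian-covariance
matrix): `det V = σ^{2n} ∏_{s=2}^{n} ∏_{x=1}^{s-1} (1 - e^{-2xθδ²})`. -/
theorem det_gaussian_cov_factorization (n : ℕ) (σ θ δ : ℝ) (hn : 1 ≤ n)
    (hσ : 0 < σ) (hθ : 0 < θ) (hδ : 0 < δ) :
    (Matrix.of fun i j : Fin n =>
        σ ^ 2 * Real.exp (-θ * ((i : ℝ) - (j : ℝ)) ^ 2 * δ ^ 2)).det =
      σ ^ (2 * n) *
        ∏ s ∈ Finset.Icc 2 n, ∏ x ∈ Finset.Icc 1 (s - 1),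
          (1 - Real.exp (-(2 * (x : ℝ)) * θ * δ ^ 2)) :=
  det_gaussian_cov_factorization_general n σ θ δ
end

section
/- Determinant of the 1D Gaussian-covariance matrix as a product over point pairs: det(V) = σ^{2n} ∏_{q=1}^{n−1} (1 − e^{−2qθδ²})^{n−q}, i.e., each of the n−q pairs of points at separation qδ contributes one factor h_q = 1 − η^{2q} to det(V)/σ^{2n}. -/
/-!
Writing `η ^ (i - j)² = η ^ i² · η ^ j² · (η⁻²ⁱ) ^ j` exhibits the kernel matrix as
`diag (η ^ i²) · vandermonde (η⁻²ⁱ) · diag (η ^ j²)`. Each Vandermonde factor splits as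
`η⁻²ʲ - η⁻²ⁱ = η⁻²ʲ (1 - η ^ 2(j - i))`; the `j` prefactors `η⁻²ʲ` attached to each `j` cancel the two
diagonal factors `η ^ j²`, and the pair `i < j` contributes `1 - η ^ 2(j - i)`, where each
separation `q` occurs for exactly `n - q` pairs.
-/

open Finset

theorem Fin.prod_prod_Ioi_eq_prod_range_prod_range {M : Type*} [CommMonoid M] {n : ℕ}
    (g : ℕ → ℕ → M) :
    ∏ i : Fin n, ∏ j ∈ Ioi i, g i j = ∏ j ∈ range n, ∏ i ∈ range j, g i j := by
  rw [prod_comm' (t' := univ) (s' := Iio) (by simp), ← Fin.prod_univ_eq_prod_range]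
  refine prod_congr rfl fun j _ => ?_
  rw [← Nat.Iio_eq_range, ← Fin.map_valEmbedding_Iio, prod_map]
  rfl

theorem Finset.prod_range_prod_range_sub {M : Type*} [CommMonoid M] (f : ℕ → M) (n : ℕ) :
    ∏ j ∈ range n, ∏ i ∈ range j, f (j - i) = ∏ q ∈ Ico 1 n, f q ^ (n - q) := by
  have hinner : ∀ j, ∏ i ∈ range j, f (j - i) = ∏ q ∈ Ico 1 (j + 1), f q := fun j => by
    rw [← Nat.Ico_zero_eq_range, prod_Ico_reflect f 0 (Nat.le_succ j)]
    simp
  simp_rw [hinner]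
  rw [prod_comm' (t' := Ico 1 n) (s' := fun q => Ico q n)
    (by intro j q; simp only [mem_range, mem_Ico]; omega)]
  simp

theorem zpow_natCast_sub_sq {K : Type*} [Field K] {η : K} (hη : η ≠ 0) (i j : ℕ) :
    η ^ (((i : ℤ) - j) ^ 2) = η ^ (i ^ 2) * (η ^ (j ^ 2) * ((η ^ 2)⁻¹ ^ i) ^ j) := by
  rw [← pow_mul, ← inv_pow, ← pow_mul, inv_pow]
  simp only [← zpow_natCast, ← zpow_neg, ← zpow_add₀ hη]
  congr 1
  push_cast
  ring

theorem inv_pow_sub_inv_pow_of_le {K : Type*} [Field K] {x : K} (hx : x ≠ 0) {i j : ℕ}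
    (hij : i ≤ j) : x⁻¹ ^ j - x⁻¹ ^ i = x⁻¹ ^ j * (1 - x ^ (j - i)) := by
  obtain ⟨d, rfl⟩ := Nat.exists_eq_add_of_le hij
  rw [Nat.add_sub_cancel_left, pow_add, mul_one_sub, mul_assoc, ← mul_pow, inv_mul_cancel₀ hx,
    one_pow, mul_one]

theorem Matrix.det_of_zpow_sub_sq {K : Type*} [Field K] {η : K} (hη : η ≠ 0) (n : ℕ) :
    (Matrix.of fun i j : Fin n => η ^ (((i : ℤ) - j) ^ 2)).det =
      ∏ q ∈ Ico 1 n, (1 - η ^ (2 * q)) ^ (n - q) := by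
  have hfactor : (Matrix.of fun i j : Fin n => η ^ (((i : ℤ) - j) ^ 2)) =
      Matrix.of fun i j : Fin n => η ^ ((j : ℕ) ^ 2) *
        (Matrix.of fun k l : Fin n => η ^ ((k : ℕ) ^ 2) *
          Matrix.vandermonde (fun k : Fin n => (η ^ 2)⁻¹ ^ (k : ℕ)) k l) i j := by
    ext i j
    simp only [Matrix.of_apply, Matrix.vandermonde_apply, zpow_natCast_sub_sq hη]
    ring
  have hdiff : ∀ i : Fin n, ∀ j ∈ Ioi i, (η ^ 2)⁻¹ ^ (j : ℕ) - (η ^ 2)⁻¹ ^ (i : ℕ) =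
      (η ^ 2)⁻¹ ^ (j : ℕ) * (1 - η ^ (2 * ((j : ℕ) - i))) := fun i j hij => by
    rw [inv_pow_sub_inv_pow_of_le (pow_ne_zero 2 hη)
      (Fin.le_iff_val_le_val.mp (mem_Ioi.mp hij).le), pow_mul]
  have hcancel : ∀ j : ℕ, η ^ (j ^ 2) * η ^ (j ^ 2) * ∏ _i ∈ range j, (η ^ 2)⁻¹ ^ j = 1 := by
    intro j
    rw [prod_const, card_range, ← pow_mul, inv_pow, ← pow_mul, ← pow_add, ← two_mul, sq,
      mul_inv_cancel₀ (pow_ne_zero _ hη)]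
  rw [hfactor, Matrix.det_mul_row, Matrix.det_mul_column, Matrix.det_vandermonde,
    prod_congr rfl fun i _ => prod_congr rfl (hdiff i), ← Finset.prod_range_prod_range_sub]
  simp only [prod_mul_distrib]
  rw [Fin.prod_prod_Ioi_eq_prod_range_prod_range (fun _ j => (η ^ 2)⁻¹ ^ j),
    Fin.prod_prod_Ioi_eq_prod_range_prod_range (fun i j => 1 - η ^ (2 * (j - i))),
    Fin.prod_univ_eq_prod_range (fun i => η ^ (i ^ 2)), ← mul_assoc, ← mul_assoc,
    ← prod_mul_distrib, ← prod_mul_distrib, prod_congr rfl fun j _ => hcancel j, prod_const_one,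
    one_mul]

theorem det_gaussian_cov_pair_product_general (n : ℕ) (σ θ δ : ℝ) :
    (Matrix.of fun i j : Fin n =>
        σ ^ 2 * Real.exp (-θ * ((i : ℝ) - (j : ℝ)) ^ 2 * δ ^ 2)).det =
      σ ^ (2 * n) *
        ∏ q ∈ Finset.Icc 1 (n - 1),
          (1 - Real.exp (-(2 * (q : ℝ)) * θ * δ ^ 2)) ^ (n - q) := by
  set η := Real.exp (-θ * δ ^ 2)
  have hmatrix : (Matrix.of fun i j : Fin n =>
      σ ^ 2 * Real.exp (-θ * ((i : ℝ) - (j : ℝ)) ^ 2 * δ ^ 2)) =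
        σ ^ 2 • Matrix.of fun i j : Fin n => η ^ (((i : ℤ) - j) ^ 2) := by
    ext i j
    rw [Matrix.smul_apply, Matrix.of_apply, Matrix.of_apply, smul_eq_mul, ← Real.rpow_intCast,
      ← Real.exp_mul]
    push_cast
    ring_nf
  have hIcc : Icc 1 (n - 1) = Ico 1 n := by
    ext q
    simp only [mem_Icc, mem_Ico]
    omega
  rw [hmatrix, Matrix.det_smul, Matrix.det_of_zpow_sub_sq (Real.exp_pos _).ne', Fintype.card_fin,
    ← pow_mul, hIcc]
  congr 1
  refine prod_congr rfl fun q _ => ?_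
  rw [← Real.exp_nat_mul]
  push_cast
  ring_nf

/-- Determinant of the 1D Gaussian-covariance matrix as a product over point pairs:
`det V = σ^{2n} ∏_{q=1}^{n-1} (1 - e^{-2qθδ²})^{n-q}`. -/
theorem det_gaussian_cov_pair_product (n : ℕ) (σ θ δ : ℝ) (hn : 1 ≤ n)
    (hσ : 0 < σ) (hθ : 0 < θ) (hδ : 0 < δ) :
    (Matrix.of fun i j : Fin n =>
        σ ^ 2 * Real.exp (-θ * ((i : ℝ) - (j : ℝ)) ^ 2 * δ ^ 2)).det =
      σ ^ (2 * n) *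
        ∏ q ∈ Finset.Icc 1 (n - 1),
          (1 - Real.exp (-(2 * (q : ℝ)) * θ * δ ^ 2)) ^ (n - q) :=
  det_gaussian_cov_pair_product_general n σ θ δ
end

section
/- Positivity of the determinant of the 1D Gaussian-covariance matrix of evenly spaced points: det(V) > 0; in particular V is invertible. -/
/-!
Expanding `-(i - j)² = -i² + 2ij - j²` factors `V = σ² • D K D` with `D` the diagonal matrix of
the `exp (-θ δ² i²)` and `K i j = exp (2 θ δ² i j) = (exp (2 θ δ² i)) ^ j`. So `K` is the
Vandermonde matrix of the strictly increasing nodes `exp (2 θ δ² i)`, whose determinant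
`∏_{i < j} (v j - v i)` is positive.
-/

open Matrix Finset

theorem det_vandermonde_pos_of_strictMono {R : Type*} [CommRing R] [PartialOrder R]
    [IsStrictOrderedRing R] {n : ℕ} {v : Fin n → R} (hv : StrictMono v) :
    0 < (vandermonde v).det := by
  rw [det_vandermonde]
  exact prod_pos fun i _ => prod_pos fun j hj => sub_pos.2 (hv (mem_Ioi.1 hj))

theorem gaussian_kernel_eq_diagonal_mul_vandermonde (n : ℕ) (σ θ δ : ℝ) :
    (Matrix.of fun i j : Fin n => σ ^ 2 * Real.exp (-θ * ((i : ℝ) - (j : ℝ)) ^ 2 * δ ^ 2)) =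
      σ ^ 2 • (diagonal (fun i : Fin n => Real.exp (-θ * δ ^ 2 * (i : ℝ) ^ 2)) *
        vandermonde (fun i : Fin n => Real.exp (2 * θ * δ ^ 2 * i)) *
        diagonal (fun i : Fin n => Real.exp (-θ * δ ^ 2 * (i : ℝ) ^ 2))) := by
  ext i j
  simp only [of_apply, Matrix.smul_apply, mul_diagonal, diagonal_mul, vandermonde_apply,
    smul_eq_mul, ← Real.exp_nat_mul, ← Real.exp_add]
  congr 2
  ring

theorem det_gaussian_cov_pos_general (n : ℕ) (σ θ δ : ℝ)
    (hσ : 0 < σ) (hθ : 0 < θ) (hδ : 0 < δ) :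
    0 < (Matrix.of fun i j : Fin n =>
          σ ^ 2 * Real.exp (-θ * ((i : ℝ) - (j : ℝ)) ^ 2 * δ ^ 2)).det ∧
      IsUnit (Matrix.of fun i j : Fin n =>
          σ ^ 2 * Real.exp (-θ * ((i : ℝ) - (j : ℝ)) ^ 2 * δ ^ 2)) := by
  have hnodes : StrictMono fun i : Fin n => Real.exp (2 * θ * δ ^ 2 * i) :=
    Real.exp_strictMono.comp fun i j hij => by
      have : (i : ℝ) < j := by exact_mod_cast hij
      gcongr
  have hdet : 0 < (Matrix.of fun i j : Fin n =>
      σ ^ 2 * Real.exp (-θ * ((i : ℝ) - (j : ℝ)) ^ 2 * δ ^ 2)).det := by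
    rw [gaussian_kernel_eq_diagonal_mul_vandermonde, det_smul, det_mul, det_mul, det_diagonal]
    have := det_vandermonde_pos_of_strictMono hnodes
    positivity
  exact ⟨hdet, (isUnit_iff_isUnit_det _).2 hdet.ne'.isUnit⟩

/-- Positivity of the determinant of the 1D Gaussian-covariance matrix of evenly
spaced points: `det V > 0`; in particular `V` is invertible. -/
theorem det_gaussian_cov_pos (n : ℕ) (σ θ δ : ℝ) (hn : 1 ≤ n)
    (hσ : 0 < σ) (hθ : 0 < θ) (hδ : 0 < δ) :
    0 < (Matrix.of fun i j : Fin n =>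
          σ ^ 2 * Real.exp (-θ * ((i : ℝ) - (j : ℝ)) ^ 2 * δ ^ 2)).det ∧
      IsUnit (Matrix.of fun i j : Fin n =>
          σ ^ 2 * Real.exp (-θ * ((i : ℝ) - (j : ℝ)) ^ 2 * δ ^ 2)) :=
  det_gaussian_cov_pos_general n σ θ δ hσ hθ hδ
end

section
/- Lemma, Part c (lowest-degree term of the determinant in powers of δ): For fixed n ≥ 1, σ > 0 and θ > 0, the limit as δ → 0⁺ of det(V(δ)) / δ^{n(n−1)} equals σ^{2n} · SF(n−1) · (2θ)^{n(n−1)/2}; equivalently, det(V(δ)) = σ^{2n} SF(n−1) (2θ)^{n(n−1)/2} δ^{n(n−1)} + o(δ^{n(n−1)}) as δ → 0⁺. -/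
/-!
Writing `x_i = exp (2θ i δ²)`, the entry `σ² exp (-θ (i - j)² δ²)` factors as
`a_i a_j x_i ^ j` with `a_i = σ exp (-θ i² δ²)`, so `det V(δ)` is `(∏ a_i)²` times the
Vandermonde determinant `∏_{i < j} (x_j - x_i)`. Each of its `n (n - 1) / 2` factors is
`2θ (j - i) δ² + o(δ²)`, and `∏_{i < j} (j - i) = SF(n - 1)`.
-/

/-- The superfactorial `SF(m) = ∏_{k=1}^{m} k!`, with `SF(0) = 1`. -/
def superfactorial (m : ℕ) : ℕ := ∏ k ∈ Finset.Icc 1 m, Nat.factorial k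

open Filter Topology Real Finset

namespace Fin

theorem sum_card_Ioi (n : ℕ) : ∑ i : Fin n, #(Ioi i) = n * (n - 1) / 2 := by
  simp_rw [Fin.card_Ioi]
  rw [sum_univ_eq_sum_range (fun i => n - 1 - i), sum_range_reflect (fun i => i), sum_range_id]

theorem prod_prod_Ioi_const {M : Type*} [CommMonoid M] (n : ℕ) (c : M) :
    ∏ i : Fin n, ∏ _j ∈ Ioi i, c = c ^ (n * (n - 1) / 2) := by
  simp_rw [Finset.prod_const, prod_pow_eq_pow_sum, sum_card_Ioi]

theorem prod_prod_Ioi_div {K : Type*} [DivisionCommMonoid K] (n : ℕ) (f : Fin n → Fin n → K)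
    (c : K) : ∏ i : Fin n, ∏ j ∈ Ioi i, f i j / c =
      (∏ i : Fin n, ∏ j ∈ Ioi i, f i j) / c ^ (n * (n - 1) / 2) := by
  simp_rw [prod_div_distrib, ← prod_prod_Ioi_const n c]

theorem prod_prod_Ioi_sub_cast {R : Type*} [CommRing R] (n : ℕ) :
    ∏ i : Fin n, ∏ j ∈ Ioi i, ((j : R) - i) = (n - 1).superFactorial := by
  cases n with
  | zero => simp
  | succ m =>
    rw [← Matrix.det_vandermonde, Matrix.det_vandermonde_id_eq_superFactorial, Nat.add_sub_cancel]

theorem prod_prod_Ioi_mul_sub_mul {R : Type*} [CommRing R] (n : ℕ) (c : R) :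
    ∏ i : Fin n, ∏ j ∈ Ioi i, (c * j - c * i) =
      c ^ (n * (n - 1) / 2) * (n - 1).superFactorial := by
  simp_rw [← mul_sub, prod_mul_distrib, prod_prod_Ioi_const, prod_prod_Ioi_sub_cast]

end Fin

theorem superfactorial_eq_superFactorial (m : ℕ) : superfactorial m = m.superFactorial :=
  Nat.prod_Icc_factorial m

theorem Matrix.det_of_mul_mul_pow {R : Type*} [CommRing R] {n : ℕ} (a v : Fin n → R) :
    (Matrix.of fun i j : Fin n => a i * a j * v i ^ (j : ℕ)).det =
      (∏ i, a i) ^ 2 * ∏ i : Fin n, ∏ j ∈ Ioi i, (v j - v i) := by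
  have : (Matrix.of fun i j : Fin n => a i * a j * v i ^ (j : ℕ)) =
      Matrix.of fun i j => a i * Matrix.of (fun i j => a j * Matrix.vandermonde v i j) i j := by
    ext; simp [mul_assoc]
  rw [this, Matrix.det_mul_column, Matrix.det_mul_row, Matrix.det_vandermonde, sq, mul_assoc]

theorem gaussian_kernel_eq_mul_mul_pow (σ θ x : ℝ) (k : ℕ) (t : ℝ) :
    σ ^ 2 * exp (-θ * (x - k) ^ 2 * t) =
      (σ * exp (-θ * x ^ 2 * t)) * (σ * exp (-θ * (k : ℝ) ^ 2 * t)) *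
        exp (2 * θ * x * t) ^ k := by
  have : -θ * (x - k) ^ 2 * t =
      -θ * x ^ 2 * t + -θ * (k : ℝ) ^ 2 * t + k * (2 * θ * x * t) := by
    ring
  rw [this, exp_add, exp_add, exp_nat_mul]
  ring

theorem det_gaussian_kernel_eq (n : ℕ) (σ θ t : ℝ) :
    (Matrix.of fun i j : Fin n => σ ^ 2 * exp (-θ * ((i : ℝ) - (j : ℝ)) ^ 2 * t)).det =
      (∏ i : Fin n, σ * exp (-θ * (i : ℝ) ^ 2 * t)) ^ 2 *
        ∏ i : Fin n, ∏ j ∈ Ioi i, (exp (2 * θ * j * t) - exp (2 * θ * i * t)) := by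
  simp_rw [gaussian_kernel_eq_mul_mul_pow]
  exact Matrix.det_of_mul_mul_pow _ _

theorem tendsto_exp_mul_sub_exp_mul_div (a b : ℝ) :
    Tendsto (fun t => (exp (b * t) - exp (a * t)) / t) (𝓝[≠] 0) (𝓝 (b - a)) := by
  have h : HasDerivAt (fun t => exp (b * t) - exp (a * t)) (b - a) 0 := by
    simpa using ((hasDerivAt_id (0 : ℝ)).const_mul b).exp.fun_sub
      ((hasDerivAt_id (0 : ℝ)).const_mul a).exp
  simpa [div_eq_inv_mul] using hasDerivAt_iff_tendsto_slope_zero.mp h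

theorem tendsto_sq_nhdsGT_nhdsNE : Tendsto (fun δ : ℝ => δ ^ 2) (𝓝[>] 0) (𝓝[≠] 0) :=
  tendsto_nhdsWithin_iff.mpr
    ⟨(continuous_pow 2).tendsto' 0 0 (zero_pow two_ne_zero) |>.mono_left nhdsWithin_le_nhds,
      eventually_mem_nhdsWithin.mono fun _ hδ => pow_ne_zero 2 (ne_of_gt hδ)⟩

theorem det_gaussian_cov_leading_term_general (n : ℕ) (σ θ : ℝ) :
    Filter.Tendsto
      (fun δ : ℝ =>
        (Matrix.of fun i j : Fin n =>
            σ ^ 2 * Real.exp (-θ * ((i : ℝ) - (j : ℝ)) ^ 2 * δ ^ 2)).det /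
          δ ^ (n * (n - 1)))
      (nhdsWithin 0 (Set.Ioi 0))
      (nhds (σ ^ (2 * n) * (superfactorial (n - 1) : ℝ) *
        (2 * θ) ^ (n * (n - 1) / 2))) := by
  have hpow (δ : ℝ) : δ ^ (n * (n - 1)) = (δ ^ 2) ^ (n * (n - 1) / 2) := by
    rw [← pow_mul, Nat.mul_div_cancel' (Nat.even_mul_pred_self n).two_dvd]
  simp_rw [det_gaussian_kernel_eq, hpow, mul_div_assoc, ← Fin.prod_prod_Ioi_div]
  have hdiag :
      Tendsto (fun δ : ℝ => (∏ i : Fin n, σ * exp (-θ * (i : ℝ) ^ 2 * δ ^ 2)) ^ 2)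
        (𝓝[>] 0) (𝓝 (σ ^ (2 * n))) := by
    have hcont : Continuous fun δ : ℝ =>
        (∏ i : Fin n, σ * exp (-θ * (i : ℝ) ^ 2 * δ ^ 2)) ^ 2 := by
      fun_prop
    simpa [pow_mul'] using (hcont.continuousWithinAt (s := Set.Ioi 0) (x := 0)).tendsto
  have hvandermonde := tendsto_finsetProd (univ : Finset (Fin n)) fun i _ =>
    tendsto_finsetProd (Ioi i) fun j _ =>
      (tendsto_exp_mul_sub_exp_mul_div (2 * θ * i) (2 * θ * j)).comp tendsto_sq_nhdsGT_nhdsNE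
  rw [Fin.prod_prod_Ioi_mul_sub_mul] at hvandermonde
  rw [superfactorial_eq_superFactorial, mul_assoc, mul_comm ((n - 1).superFactorial : ℝ)]
  exact hdiag.mul hvandermonde

/-- Lemma, Part c (lowest-degree term of the determinant in powers of `δ`):
`det (V(δ)) / δ^{n(n-1)} → σ^{2n} · SF(n-1) · (2θ)^{n(n-1)/2}` as `δ → 0⁺`. -/
theorem det_gaussian_cov_leading_term (n : ℕ) (σ θ : ℝ) (hn : 1 ≤ n)
    (hσ : 0 < σ) (hθ : 0 < θ) :
    Filter.Tendsto
      (fun δ : ℝ =>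
        (Matrix.of fun i j : Fin n =>
            σ ^ 2 * Real.exp (-θ * ((i : ℝ) - (j : ℝ)) ^ 2 * δ ^ 2)).det /
          δ ^ (n * (n - 1)))
      (nhdsWithin 0 (Set.Ioi 0))
      (nhds (σ ^ (2 * n) * (superfactorial (n - 1) : ℝ) *
        (2 * θ) ^ (n * (n - 1) / 2))) :=
  det_gaussian_cov_leading_term_general n σ θ
end
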